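/- Let K be a nonnegative integrable kernel with ∫_ℝ K = 1, c ≥ 2, β > 1 and b > 1 + 2β. Let φ₊ be a strictly increasing C² solution of φ₊''(t) − cφ₊'(t) + g_β(φ₊(t)) = 0 with lim_{t→−∞} φ₊(t) = 0 and lim_{t→+∞} φ₊(t) = 2β. Then for every continuous bounded φ : ℝ → ℝ with 0 ≤ φ(t) ≤ φ₊(t) for all t ∈ ℝ, one has 0 ≤ (A_m φ)(t) ≤ φ₊(t) for all t ∈ ℝ. -/

import Mathlib

open Filter MeasureTheory Real Set

noncomputable def conv (K φ : ℝ → ℝ) (t : ℝ) : ℝ := ∫ s, K s * φ (t - s)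

noncomputable def gbeta (β u : ℝ) : ℝ := if u ≤ β then u else max 0 (2 * β - u)

/-- `z₁ < 0`, the negative root of `z² - cz - b = 0` (for `b > 0`). -/
noncomputable def zneg (c b : ℝ) : ℝ := (c - Real.sqrt (c ^ 2 + 4 * b)) / 2

/-- `z₂ > 0`, the positive root of `z² - cz - b = 0` (for `b > 0`). -/
noncomputable def zpos (c b : ℝ) : ℝ := (c + Real.sqrt (c ^ 2 + 4 * b)) / 2

/-- `r(φ)(t) = bφ(t) + g_β(φ(t))(1 - (K*φ)(t))`. -/
noncomputable def rop (K : ℝ → ℝ) (β b : ℝ) (φ : ℝ → ℝ) (t : ℝ) : ℝ :=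
  b * φ t + gbeta β (φ t) * (1 - conv K φ t)

/-- The integral operator
`(A_m φ)(t) = (1/z₁₂)[∫_{-∞}^t e^{z₁(t-s)} r(φ)(s) ds
              + ∫_t^{+∞} e^{z₂(t-s)} r(φ)(s) ds]`. -/
noncomputable def Am (K : ℝ → ℝ) (c β b : ℝ) (φ : ℝ → ℝ) (t : ℝ) : ℝ :=
  (1 / (zpos c b - zneg c b)) *
    ((∫ s in Iic t, Real.exp (zneg c b * (t - s)) * rop K β b φ s) +
     (∫ s in Ici t, Real.exp (zpos c b * (t - s)) * rop K β b φ s))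

/-!
The profile satisfies `φ₊'' - cφ₊' - bφ₊ = -h` with `h = bφ₊ + g_β(φ₊)`. Factoring
`∂² - c∂ - b = (∂ - z₁)(∂ - z₂)` and using that `φ₊` and `φ₊'` are bounded, the Green function
of this operator represents `φ₊` exactly as `A_m` would with `r(φ)` replaced by `h`. The Green
function is positive, so it suffices that `0 ≤ r(φ) ≤ h`: the upper bound holds because
`u ↦ bu + g_β(u)` is nondecreasing for `b ≥ 1` and `K * φ ≥ 0`, the lower bound because
`g_β(u) ≤ u` and `K * φ ≤ 2β ≤ b + 1`. The derivative `φ₊'` is bounded since `e^{-cs} φ₊'(s)`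
is nonincreasing, which bounds `φ₊'(t)` by `e^c (φ₊(t) - φ₊(t - 1)) ≤ 2β e^c`.
-/

open Topology

lemma gbeta_nonneg {β u : ℝ} (hu : 0 ≤ u) : 0 ≤ gbeta β u := by
  unfold gbeta
  split_ifs
  exacts [hu, le_max_left _ _]

lemma gbeta_le_self {β u : ℝ} (hu : 0 ≤ u) : gbeta β u ≤ u := by
  unfold gbeta
  split_ifs
  exacts [le_rfl, max_le hu (by linarith)]

lemma gbeta_sub_gbeta_le {β u v : ℝ} (huv : u ≤ v) : gbeta β u - gbeta β v ≤ v - u := by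
  unfold gbeta
  simp only [max_def]
  split_ifs <;> linarith

lemma monotone_mul_add_gbeta {β b : ℝ} (hb : 1 ≤ b) : Monotone fun u => b * u + gbeta β u :=
  fun u v huv => by nlinarith [gbeta_sub_gbeta_le (β := β) huv]

lemma abs_mul_add_gbeta_le {β b u M : ℝ} (hb : 0 ≤ b) (hu : 0 ≤ u) (huM : u ≤ M) :
    |b * u + gbeta β u| ≤ (b + 1) * M := by
  have hg0 := gbeta_nonneg (β := β) hu
  have hgu := gbeta_le_self (β := β) hu
  exact abs_le.2 ⟨by nlinarith, by nlinarith⟩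

lemma measurable_gbeta (β : ℝ) : Measurable (gbeta β) :=
  Measurable.ite (measurableSet_le measurable_id measurable_const) measurable_id (by fun_prop)

lemma abs_lt_sqrt_sq_add {c b : ℝ} (hb : 0 < b) : |c| < √(c ^ 2 + 4 * b) :=
  (Real.lt_sqrt (abs_nonneg c)).2 (by rw [sq_abs]; linarith)

lemma zneg_neg {c b : ℝ} (hb : 0 < b) : zneg c b < 0 := by
  unfold zneg; linarith [le_abs_self c, abs_lt_sqrt_sq_add (c := c) hb]

lemma zpos_pos {c b : ℝ} (hb : 0 < b) : 0 < zpos c b := by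
  unfold zpos; linarith [neg_abs_le c, abs_lt_sqrt_sq_add (c := c) hb]

lemma zneg_add_zpos (c b : ℝ) : zneg c b + zpos c b = c := by
  unfold zneg zpos; ring

lemma zneg_mul_zpos {c b : ℝ} (hb : 0 ≤ c ^ 2 + 4 * b) : zneg c b * zpos c b = -b := by
  unfold zneg zpos
  nlinarith [Real.sq_sqrt hb]

lemma conv_nonneg {K φ : ℝ → ℝ} (hK0 : ∀ᵐ s ∂(volume : Measure ℝ), 0 ≤ K s)
    (hφ : ∀ s, 0 ≤ φ s) (t : ℝ) : 0 ≤ conv K φ t :=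
  integral_nonneg_of_ae (by filter_upwards [hK0] with s hs using mul_nonneg hs (hφ _))

lemma conv_le {K φ : ℝ → ℝ} {M : ℝ} (hKi : Integrable K)
    (hK0 : ∀ᵐ s ∂(volume : Measure ℝ), 0 ≤ K s) (hK1 : (∫ s, K s) = 1)
    (hφ0 : ∀ s, 0 ≤ φ s) (hφM : ∀ s, φ s ≤ M) (t : ℝ) : conv K φ t ≤ M :=
  calc conv K φ t ≤ ∫ s, K s * M :=
        integral_mono_of_nonneg
          (by filter_upwards [hK0] with s hs using mul_nonneg hs (hφ0 _)) (hKi.mul_const M)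
          (by filter_upwards [hK0] with s hs using mul_le_mul_of_nonneg_left (hφM _) hs)
    _ = M := by rw [integral_mul_const, hK1, one_mul]

lemma rop_nonneg {K φ : ℝ → ℝ} {β b t : ℝ} (hb : 0 ≤ b) (hφ : 0 ≤ φ t)
    (hconv : conv K φ t ≤ b + 1) :
    0 ≤ rop K β b φ t := by
  have hg0 := gbeta_nonneg (β := β) hφ
  have hgφ := gbeta_le_self (β := β) hφ
  unfold rop
  rcases le_total (conv K φ t) 1 with h | h
  · nlinarith [mul_nonneg hg0 (sub_nonneg.2 h), mul_nonneg hb hφ]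
  · nlinarith [mul_nonneg (sub_nonneg.2 hgφ) (sub_nonneg.2 h), mul_le_mul_of_nonneg_left hconv hφ]

lemma rop_le {K φ : ℝ → ℝ} {β b t u : ℝ} (hb : 1 ≤ b) (hφ : 0 ≤ φ t) (hφu : φ t ≤ u)
    (hconv : 0 ≤ conv K φ t) : rop K β b φ t ≤ b * u + gbeta β u := by
  have hg0 := gbeta_nonneg (β := β) hφ
  have := monotone_mul_add_gbeta (β := β) hb hφu
  unfold rop
  nlinarith

lemma integral_mul_nonneg_and_le {α : Type*} [MeasurableSpace α] {μ : Measure α}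
    {w u v : α → ℝ} (hw : ∀ s, 0 ≤ w s) (huv : ∀ s, 0 ≤ u s ∧ u s ≤ v s)
    (hv : Integrable (fun s => w s * v s) μ) :
    0 ≤ ∫ s, w s * u s ∂μ ∧ ∫ s, w s * u s ∂μ ≤ ∫ s, w s * v s ∂μ :=
  ⟨integral_nonneg fun s => mul_nonneg (hw s) (huv s).1,
    integral_mono_of_nonneg (ae_of_all _ fun s => mul_nonneg (hw s) (huv s).1) hv
      (ae_of_all _ fun s => mul_le_mul_of_nonneg_left (huv s).2 (hw s))⟩

lemma integrableOn_Iic_exp_mul {a t C : ℝ} {g : ℝ → ℝ} (ha : a < 0)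
    (hg : AEStronglyMeasurable g) (hC : ∀ s, |g s| ≤ C) :
    IntegrableOn (fun s => exp (a * (t - s)) * g s) (Iic t) := by
  have hexp : IntegrableOn (fun s => exp (a * t) * exp (-a * s)) (Iic t) :=
    (integrableOn_exp_mul_Iic (neg_pos.2 ha) t).const_mul _
  refine IntegrableOn.congr_fun (hexp.mul_bdd hg.restrict (ae_of_all _ fun s => hC s))
    (fun s _ => ?_) measurableSet_Iic
  rw [← exp_add]; ring_nf

lemma integrableOn_Ici_exp_mul {a t C : ℝ} {g : ℝ → ℝ} (ha : 0 < a)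
    (hg : AEStronglyMeasurable g) (hC : ∀ s, |g s| ≤ C) :
    IntegrableOn (fun s => exp (a * (t - s)) * g s) (Ici t) := by
  have hexp : IntegrableOn (fun s => exp (a * t) * exp (-a * s)) (Ici t) :=
    (integrableOn_Ici_iff_integrableOn_Ioi).2
      ((integrableOn_exp_mul_Ioi (neg_neg_iff_pos.2 ha) t).const_mul _)
  refine IntegrableOn.congr_fun (hexp.mul_bdd hg.restrict (ae_of_all _ fun s => hC s))
    (fun s _ => ?_) measurableSet_Ici
  rw [← exp_add]; ring_nf

lemma hasDerivAt_exp_mul_sub_mul {a t s ψ' : ℝ} {ψ : ℝ → ℝ} (hψ : HasDerivAt ψ ψ' s) :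
    HasDerivAt (fun s => exp (a * (t - s)) * ψ s) (exp (a * (t - s)) * (ψ' - a * ψ s)) s := by
  have hexp : HasDerivAt (fun s => exp (a * (t - s))) (exp (a * (t - s)) * (a * -1)) s :=
    (((hasDerivAt_id s).const_sub t).const_mul a).exp
  exact (hexp.mul hψ).congr_deriv (by ring)

lemma tendsto_exp_mul_sub_mul_zero {a t C : ℝ} {ψ : ℝ → ℝ} {l : Filter ℝ}
    (hexp : Tendsto (fun s => a * (t - s)) l atBot) (hψ : ∀ s, |ψ s| ≤ C) :
    Tendsto (fun s => exp (a * (t - s)) * ψ s) l (𝓝 0) :=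
  (tendsto_exp_atBot.comp hexp).zero_mul_isBoundedUnder_le
    (isBoundedUnder_of ⟨C, fun s => hψ s⟩)

lemma integral_Iic_exp_mul_eq {a t C : ℝ} {ψ g : ℝ → ℝ} (ha : a < 0)
    (hψ : ∀ s, HasDerivAt ψ (a * ψ s + g s) s) (hψC : ∀ s, |ψ s| ≤ C)
    (hint : IntegrableOn (fun s => exp (a * (t - s)) * g s) (Iic t)) :
    ∫ s in Iic t, exp (a * (t - s)) * g s = ψ t := by
  have hlim : Tendsto (fun s => a * (t - s)) atBot atBot :=
    Tendsto.const_mul_atTop_of_neg ha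
      (tendsto_atTop_add_const_left atBot t tendsto_neg_atBot_atTop)
  rw [integral_Iic_of_hasDerivAt_of_tendsto'
    (fun s _ => (hasDerivAt_exp_mul_sub_mul (hψ s)).congr_deriv (by ring)) hint
    (tendsto_exp_mul_sub_mul_zero hlim hψC)]
  simp

lemma integral_Ici_exp_mul_eq {a t C : ℝ} {ψ g : ℝ → ℝ} (ha : 0 < a)
    (hψ : ∀ s, HasDerivAt ψ (a * ψ s + g s) s) (hψC : ∀ s, |ψ s| ≤ C)
    (hint : IntegrableOn (fun s => exp (a * (t - s)) * g s) (Ici t)) :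
    ∫ s in Ici t, exp (a * (t - s)) * g s = -ψ t := by
  have hlim : Tendsto (fun s => a * (t - s)) atTop atBot :=
    Tendsto.const_mul_atBot ha
      (tendsto_atBot_add_const_left atTop t tendsto_neg_atTop_atBot)
  rw [integral_Ici_eq_integral_Ioi, integral_Ioi_of_hasDerivAt_of_tendsto'
    (fun s _ => (hasDerivAt_exp_mul_sub_mul (hψ s)).congr_deriv (by ring))
    (hint.mono_set Ioi_subset_Ici_self) (tendsto_exp_mul_sub_mul_zero hlim hψC)]
  simp

lemma green_representation {z₁ z₂ A B t : ℝ} {f f' h : ℝ → ℝ} (hz₁ : z₁ < 0) (hz₂ : 0 < z₂)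
    (hf : ∀ s, HasDerivAt f (f' s) s)
    (hf' : ∀ s, HasDerivAt f' ((z₁ + z₂) * f' s - z₁ * z₂ * f s - h s) s)
    (hfA : ∀ s, |f s| ≤ A) (hf'B : ∀ s, |f' s| ≤ B)
    (hint₁ : IntegrableOn (fun s => exp (z₁ * (t - s)) * h s) (Iic t))
    (hint₂ : IntegrableOn (fun s => exp (z₂ * (t - s)) * h s) (Ici t)) :
    (∫ s in Iic t, exp (z₁ * (t - s)) * h s) + (∫ s in Ici t, exp (z₂ * (t - s)) * h s) =
      (z₂ - z₁) * f t := by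
  have bound : ∀ z s, |z * f s - f' s| ≤ |z| * A + B := fun z s =>
    (abs_sub _ _).trans (add_le_add
      (by rw [abs_mul]; exact mul_le_mul_of_nonneg_left (hfA s) (abs_nonneg z)) (hf'B s))
  -- `(∂ - z₁)(∂ - z₂) f = -h`, so `ψ = z₂ f - f'` solves `ψ' = z₁ ψ + h`, and symmetrically
  have left := integral_Iic_exp_mul_eq hz₁ (ψ := fun s => z₂ * f s - f' s)
    (fun s => (((hf s).const_mul z₂).sub (hf' s)).congr_deriv (by ring)) (bound z₂) hint₁
  have right := integral_Ici_exp_mul_eq hz₂ (ψ := fun s => z₁ * f s - f' s)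
    (fun s => (((hf s).const_mul z₁).sub (hf' s)).congr_deriv (by ring)) (bound z₁) hint₂
  rw [left, right]
  ring

lemma le_exp_mul_sub_of_second_deriv_le {c t : ℝ} {f f' f'' : ℝ → ℝ} (hc : 0 ≤ c)
    (hf : ∀ s, HasDerivAt f (f' s) s) (hf' : ∀ s, HasDerivAt f' (f'' s) s)
    (hf'' : ∀ s, f'' s ≤ c * f' s) (ht : 0 ≤ f' t) :
    f' t ≤ exp c * (f t - f (t - 1)) := by
  have hw : Antitone fun s => exp (-c * s) * f' s :=
    antitone_of_hasDerivAt_nonpos (f' := fun s => exp (-c * s) * (f'' s - c * f' s))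
      (fun s => (((hasDerivAt_id s).const_mul (-c)).exp.mul (hf' s)).congr_deriv
        (by simp only [id_eq]; ring))
      (fun s => mul_nonpos_of_nonneg_of_nonpos (exp_pos _).le (by linarith [hf'' s]))
  have hlow : ∀ s ∈ interior (Icc (t - 1) t), exp (-c) * f' t ≤ deriv f s := by
    intro s hs
    rw [interior_Icc] at hs
    rw [(hf s).deriv]
    calc exp (-c) * f' t ≤ exp (c * (s - t)) * f' t := by
          gcongr; nlinarith [hs.1]
      _ = exp (c * s) * (exp (-c * t) * f' t) := by rw [← mul_assoc, ← exp_add]; ring_nf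
      _ ≤ exp (c * s) * (exp (-c * s) * f' s) :=
          mul_le_mul_of_nonneg_left (hw hs.2.le) (exp_pos _).le
      _ = f' s := by rw [← mul_assoc, ← exp_add]; simp
  have := (convex_Icc (t - 1) t).mul_sub_le_image_sub_of_le_deriv
    (fun s _ => (hf s).continuousAt.continuousWithinAt)
    (fun s _ => (hf s).differentiableAt.differentiableWithinAt) hlow
    (t - 1) (by simp) t (by simp) (by linarith)
  calc f' t = exp c * (exp (-c) * f' t * (t - (t - 1))) := by
        rw [← mul_assoc, ← mul_assoc, ← exp_add]; simp
    _ ≤ exp c * (f t - f (t - 1)) := by gcongr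

lemma green_representation_of_ode {c β b M t : ℝ} {φp : ℝ → ℝ} (hc : 0 ≤ c) (hb : 0 < b)
    (hφpC : ContDiff ℝ 2 φp) (hφpMono : Monotone φp)
    (hφpEq : ∀ t, deriv (deriv φp) t - c * deriv φp t + gbeta β (φp t) = 0)
    (hφp : ∀ s, 0 ≤ φp s ∧ φp s ≤ M)
    (hint₁ : IntegrableOn
      (fun s => exp (zneg c b * (t - s)) * (b * φp s + gbeta β (φp s))) (Iic t))
    (hint₂ : IntegrableOn
      (fun s => exp (zpos c b * (t - s)) * (b * φp s + gbeta β (φp s))) (Ici t)) :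
    (∫ s in Iic t, exp (zneg c b * (t - s)) * (b * φp s + gbeta β (φp s))) +
      (∫ s in Ici t, exp (zpos c b * (t - s)) * (b * φp s + gbeta β (φp s))) =
      (zpos c b - zneg c b) * φp t := by
  have hf : ∀ s, HasDerivAt φp (deriv φp s) s :=
    fun s => (hφpC.differentiable (by norm_num) s).hasDerivAt
  have hf' : ∀ s, HasDerivAt (deriv φp) (deriv (deriv φp) s) s :=
    fun s => (hφpC.differentiable_deriv_two s).hasDerivAt
  have hf'_le : ∀ s, deriv φp s ≤ exp c * M := fun s =>
    (le_exp_mul_sub_of_second_deriv_le hc hf hf'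
      (fun s => by linarith [hφpEq s, gbeta_nonneg (β := β) (hφp s).1]) hφpMono.deriv_nonneg).trans
      (by gcongr; linarith [(hφp s).2, (hφp (s - 1)).1])
  refine green_representation (zneg_neg hb) (zpos_pos hb) hf
    (fun s => (hf' s).congr_deriv ?_) (A := M) (B := exp c * M)
    (fun s => abs_le.2 ⟨by linarith [hφp s], (hφp s).2⟩)
    (fun s => abs_le.2 ⟨by linarith [hφpMono.deriv_nonneg (x := s), hf'_le s], hf'_le s⟩)
    hint₁ hint₂
  rw [zneg_add_zpos, zneg_mul_zpos (by positivity)]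
  linarith [hφpEq s]

theorem Am_upper_solution_general
    (K : ℝ → ℝ) (hKi : Integrable K)
    (hK0 : ∀ᵐ s ∂(volume : Measure ℝ), 0 ≤ K s)
    (hK1 : (∫ s, K s) = 1)
    (c β b : ℝ) (hc : 2 ≤ c) (hβ : 1 < β) (hb : 1 + 2 * β < b)
    (φp : ℝ → ℝ) (hφpC : ContDiff ℝ 2 φp) (hφpMono : StrictMono φp)
    (hφpEq : ∀ t, deriv (deriv φp) t - c * deriv φp t + gbeta β (φp t) = 0)
    (hφpBot : Tendsto φp atBot (nhds 0))
    (hφpTop : Tendsto φp atTop (nhds (2 * β)))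
    (φ : ℝ → ℝ)
    (hφle : ∀ t, 0 ≤ φ t ∧ φ t ≤ φp t) :
    ∀ t, 0 ≤ Am K c β b φ t ∧ Am K c β b φ t ≤ φp t := by
  intro t
  have hb0 : 0 < b := by linarith
  have hφp : ∀ s, 0 ≤ φp s ∧ φp s ≤ 2 * β := fun s =>
    ⟨hφpMono.monotone.le_of_tendsto hφpBot s, hφpMono.monotone.ge_of_tendsto hφpTop s⟩
  set h : ℝ → ℝ := fun s => b * φp s + gbeta β (φp s)
  have h_meas : Measurable h :=
    (measurable_const.mul hφpC.continuous.measurable).add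
      ((measurable_gbeta β).comp hφpC.continuous.measurable)
  have h_bdd : ∀ s, |h s| ≤ (b + 1) * (2 * β) := fun s =>
    abs_mul_add_gbeta_le hb0.le (hφp s).1 (hφp s).2
  have hint₁ := integrableOn_Iic_exp_mul (t := t) (zneg_neg (c := c) hb0)
    h_meas.aestronglyMeasurable h_bdd
  have hint₂ := integrableOn_Ici_exp_mul (t := t) (zpos_pos (c := c) hb0)
    h_meas.aestronglyMeasurable h_bdd
  have hgreen := green_representation_of_ode (by linarith) hb0 hφpC hφpMono.monotone hφpEq hφp
    hint₁ hint₂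
  have hφ0 : ∀ s, 0 ≤ φ s := fun s => (hφle s).1
  have hr : ∀ s, 0 ≤ rop K β b φ s ∧ rop K β b φ s ≤ h s := fun s =>
    ⟨rop_nonneg hb0.le (hφ0 s)
      ((conv_le hKi hK0 hK1 hφ0 (fun s => (hφle s).2.trans (hφp s).2) s).trans (by linarith)),
     rop_le (by linarith) (hφ0 s) (hφle s).2 (conv_nonneg hK0 hφ0 s)⟩
  obtain ⟨hJ₁0, hJ₁⟩ := integral_mul_nonneg_and_le (fun s => (exp_pos _).le) hr hint₁
  obtain ⟨hJ₂0, hJ₂⟩ := integral_mul_nonneg_and_le (fun s => (exp_pos _).le) hr hint₂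
  have hz : 0 < zpos c b - zneg c b := by linarith [zneg_neg (c := c) hb0, zpos_pos (c := c) hb0]
  unfold Am
  rw [one_div]
  refine ⟨mul_nonneg (inv_nonneg.2 hz.le) (add_nonneg hJ₁0 hJ₂0), ?_⟩
  rw [inv_mul_le_iff₀ hz]
  linarith

/-- `φ₊` is an upper solution — if `0 ≤ φ ≤ φ₊` then
`0 ≤ A_m φ ≤ φ₊`. -/
theorem Am_upper_solution
    (K : ℝ → ℝ) (hKi : Integrable K)
    (hK0 : ∀ᵐ s ∂(volume : Measure ℝ), 0 ≤ K s)
    (hK1 : (∫ s, K s) = 1)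
    (c β b : ℝ) (hc : 2 ≤ c) (hβ : 1 < β) (hb : 1 + 2 * β < b)
    (φp : ℝ → ℝ) (hφpC : ContDiff ℝ 2 φp) (hφpMono : StrictMono φp)
    (hφpEq : ∀ t, deriv (deriv φp) t - c * deriv φp t + gbeta β (φp t) = 0)
    (hφpBot : Tendsto φp atBot (nhds 0))
    (hφpTop : Tendsto φp atTop (nhds (2 * β)))
    (φ : ℝ → ℝ) (hφcont : Continuous φ) (hφbdd : ∃ M, ∀ t, |φ t| ≤ M)
    (hφle : ∀ t, 0 ≤ φ t ∧ φ t ≤ φp t) :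
    ∀ t, 0 ≤ Am K c β b φ t ∧ Am K c β b φ t ≤ φp t :=
  Am_upper_solution_general K hKi hK0 hK1 c β b hc hβ hb φp hφpC hφpMono hφpEq hφpBot hφpTop φ hφle
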